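/- arXiv:math/0605621 — 5 statements merged into one kernel-verified Lean document; each statement's English description precedes it below -/
import Mathlib

section
/- For n ≥ 1, the number of signed compositions C of n such that the number of negative parts of C is congruent to n modulo 2 equals 3^{n-1}, and likewise the number with the number of negative parts congruent to n+1 modulo 2 equals 3^{n-1}. -/
def SC : ℕ → Finset (List ℤ)
  | 0 => {[]}
  | (n+1) =>
    (Finset.Icc 1 (n+1)).attach.biUnion fun j =>
      have : n + 1 - j.1 < n + 1 := by
        have := j.2; simp only [Finset.mem_Icc] at this; omega
      ((SC (n+1-j.1)).image (List.cons (j.1 : ℤ))) ∪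
        ((SC (n+1-j.1)).image (List.cons (-(j.1 : ℤ))))

theorem mem_SC (n : ℕ) (C : List ℤ) :
    C ∈ SC n ↔ (∀ c ∈ C, c ≠ 0) ∧ (C.map Int.natAbs).sum = n := by
  induction n using Nat.strong_induction_on generalizing C with
  | _ n ih =>
    match n with
    | 0 =>
      simp only [SC, Finset.mem_singleton]
      constructor
      · rintro rfl; simp
      · rintro ⟨h1, h2⟩
        cases C with
        | nil => rfl
        | cons a t =>
          exfalso
          have ha : a ≠ 0 := h1 a (by simp)
          have : 1 ≤ a.natAbs := by omega
          simp [List.sum_cons] at h2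
          omega
    | (m+1) =>
      rw [SC]
      simp only [Finset.mem_biUnion, Finset.mem_attach, true_and, Subtype.exists,
        Finset.mem_union, Finset.mem_image, Finset.mem_Icc]
      constructor
      · rintro ⟨j, hj, (⟨t, ht, rfl⟩ | ⟨t, ht, rfl⟩)⟩ <;>
        · rw [ih _ (by omega)] at ht
          refine ⟨fun c hc => ?_, ?_⟩
          · rcases List.mem_cons.1 hc with rfl | hc
            · simp; omega
            · exact ht.1 c hc
          · simp [ht.2]; omega
      · rintro ⟨h1, h2⟩
        cases C with
        | nil => simp at h2
        | cons a t =>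
          have ha : a ≠ 0 := h1 a (by simp)
          simp only [List.map_cons, List.sum_cons] at h2
          refine ⟨a.natAbs, by omega, ?_⟩
          have ht : t ∈ SC (m + 1 - a.natAbs) := by
            rw [ih _ (by omega)]
            exact ⟨fun c hc => h1 c (List.mem_cons_of_mem _ hc), by omega⟩
          rcases Int.natAbs_eq a with h | h
          · exact Or.inl ⟨t, ht, by rw [← h]⟩
          · exact Or.inr ⟨t, ht, by rw [← h]⟩

def fT (m : ℕ) : ℕ := if m = 0 then 1 else 2 * 3 ^ (m - 1)

theorem sum_fT (n : ℕ) : ∑ m ∈ Finset.range (n+1), fT m = 3 ^ n := by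
  induction n with
  | zero => simp [fT]
  | succ k ih =>
    rw [Finset.sum_range_succ, ih]
    simp only [fT, Nat.succ_ne_zero, if_false, Nat.add_sub_cancel]
    ring

theorem card_SC (n : ℕ) : (SC n).card = fT n := by
  induction n using Nat.strong_induction_on with
  | _ n ih =>
    match n with
    | 0 => simp [SC, fT]
    | (m+1) =>
      rw [SC]
      rw [Finset.card_biUnion]
      · have hterm : ∀ j ∈ (Finset.Icc 1 (m+1)).attach,
            (((SC (m+1-j.1)).image (List.cons (j.1 : ℤ))) ∪
              ((SC (m+1-j.1)).image (List.cons (-(j.1 : ℤ))))).card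
            = 2 * fT (m+1-j.1) := by
          intro j _
          have hj := j.2; simp only [Finset.mem_Icc] at hj
          rw [Finset.card_union_of_disjoint, Finset.card_image_of_injective _
            (List.cons_injective), Finset.card_image_of_injective _ (List.cons_injective),
            ih _ (by omega)]
          · ring
          · rw [Finset.disjoint_left]
            intro C hC hC'
            simp only [Finset.mem_image] at hC hC'
            obtain ⟨t, _, rfl⟩ := hC
            obtain ⟨s, _, h⟩ := hC'
            have : (j.1 : ℤ) = -(j.1 : ℤ) := (List.cons_eq_cons.1 h.symm).1
            omega
        rw [Finset.sum_congr rfl hterm, Finset.sum_attach (Finset.Icc 1 (m+1))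
          (fun j => 2 * fT (m+1-j))]
        have h1 : ∑ j ∈ Finset.Icc 1 (m+1), 2 * fT (m+1-j)
            = ∑ i ∈ Finset.range (m+1), 2 * fT (m - i) := by
          rw [show Finset.Icc 1 (m+1) = Finset.Ico 1 (m+2) by rfl,
            Finset.sum_Ico_eq_sum_range]
          refine Finset.sum_congr (by norm_num) (fun i _ => by rw [show m + 1 - (1 + i) = m - i by omega])
        rw [h1]
        have h2 := Finset.sum_range_reflect (fun i => 2 * fT i) (m+1)
        simp only [Nat.add_sub_cancel] at h2
        rw [h2, ← Finset.mul_sum, sum_fT]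
        simp [fT]
      · -- pairwise disjoint
        rintro ⟨j, hj⟩ _ ⟨k, hk⟩ _ hne
        simp only [Finset.mem_Icc] at hj hk
        simp only [Function.onFun]
        rw [Finset.disjoint_left]
        rintro C hC hC'
        simp only [Finset.mem_union, Finset.mem_image] at hC hC'
        have hjk : j ≠ k := fun h => hne (by simp [h])
        rcases hC with ⟨t, _, rfl⟩ | ⟨t, _, rfl⟩ <;>
          rcases hC' with ⟨s, _, h⟩ | ⟨s, _, h⟩ <;>
          · have := (List.cons_eq_cons.1 h.symm).1
            omega

def negHead : List ℤ → List ℤ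
  | [] => []
  | a :: t => (-a) :: t

theorem negHead_lemma (n : ℕ) (C : List ℤ) (hC : C ∈ SC n) :
    negHead C ∈ SC n ∧ negHead (negHead C) = C ∧
      (C ≠ [] → ((negHead C).filter (fun c => c < 0)).length % 2
        = ((C.filter (fun c => c < 0)).length + 1) % 2) := by
  rw [mem_SC] at hC
  obtain ⟨h1, h2⟩ := hC
  cases C with
  | nil =>
    simp only [List.map_nil, List.sum_nil] at h2
    subst h2
    simp [negHead, mem_SC]
  | cons a t =>
    have ha : a ≠ 0 := h1 a (by simp)
    refine ⟨?_, by simp [negHead], fun _ => ?_⟩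
    · rw [mem_SC]
      refine ⟨?_, ?_⟩
      · intro c hc
        simp only [negHead, List.mem_cons] at hc
        rcases hc with rfl | hc
        · omega
        · exact h1 c (List.mem_cons_of_mem _ hc)
      · simp only [negHead, List.map_cons, List.sum_cons] at h2 ⊢
        omega
    · simp only [negHead, List.filter_cons]
      rcases lt_or_gt_of_ne ha with h | h
      · rw [if_neg (by simp; omega), if_pos (by simpa using h)]
        simp only [List.length_cons]
        omega
      · rw [if_pos (by simp; omega), if_neg (by simp; omega)]
        simp only [List.length_cons]
        try omega

theorem filter_card_eq (n : ℕ) (hn : 1 ≤ n) :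
    ((SC n).filter (fun C => (C.filter (fun c => c < 0)).length % 2 = n % 2)).card
      = ((SC n).filter (fun C => ¬ ((C.filter (fun c => c < 0)).length % 2 = n % 2))).card := by
  refine Finset.card_bij' (fun C _ => negHead C) (fun C _ => negHead C) ?_ ?_ ?_ ?_
  · intro C hC
    simp only [Finset.mem_filter] at hC ⊢
    have hne : C ≠ [] := by
      intro h
      have := (mem_SC n C).1 hC.1
      subst h; simp at this; omega
    obtain ⟨hm, _, hp⟩ := negHead_lemma n C hC.1
    exact ⟨hm, by rw [hp hne]; omega⟩
  · intro C hC
    simp only [Finset.mem_filter] at hC ⊢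
    have hne : C ≠ [] := by
      intro h
      have := (mem_SC n C).1 hC.1
      subst h; simp at this; omega
    obtain ⟨hm, _, hp⟩ := negHead_lemma n C hC.1
    exact ⟨hm, by rw [hp hne]; omega⟩
  · intro C hC
    exact (negHead_lemma n C (Finset.mem_filter.1 hC).1).2.1
  · intro C hC
    exact (negHead_lemma n C (Finset.mem_filter.1 hC).1).2.1

theorem filter_card (n : ℕ) (hn : 1 ≤ n) :
    ((SC n).filter (fun C => (C.filter (fun c => c < 0)).length % 2 = n % 2)).card = 3 ^ (n-1) ∧
    ((SC n).filter (fun C => (C.filter (fun c => c < 0)).length % 2 = (n+1) % 2)).card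
      = 3 ^ (n-1) := by
  have htot := Finset.card_filter_add_card_filter_not (s := SC n)
    (p := fun C => (C.filter (fun c => c < 0)).length % 2 = n % 2)
  rw [card_SC] at htot
  have hft : fT n = 2 * 3 ^ (n-1) := by
    simp only [fT]; rw [if_neg (by omega)]
  rw [hft] at htot
  have heq := filter_card_eq n hn
  have h2 : ((SC n).filter (fun C => (C.filter (fun c => c < 0)).length % 2 = (n+1) % 2))
      = ((SC n).filter (fun C => ¬ ((C.filter (fun c => c < 0)).length % 2 = n % 2))) := by
    apply Finset.filter_congr
    intro C _
    omega
  constructor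
  · omega
  · rw [h2]; omega

/-- For `n ≥ 1`, the number of signed compositions of `n` whose number of negative
parts is congruent to `n` mod 2 is `3 ^ (n - 1)`, and likewise the number with the
number of negative parts congruent to `n + 1` mod 2 is `3 ^ (n - 1)`. -/
theorem signedCompositions_parity_card (n : ℕ) (hn : 1 ≤ n) :
    Set.ncard {C : List ℤ | (∀ c ∈ C, c ≠ 0) ∧ (C.map Int.natAbs).sum = n ∧
        (C.filter (fun c => c < 0)).length % 2 = n % 2} = 3 ^ (n - 1) ∧
    Set.ncard {C : List ℤ | (∀ c ∈ C, c ≠ 0) ∧ (C.map Int.natAbs).sum = n ∧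
        (C.filter (fun c => c < 0)).length % 2 = (n + 1) % 2} = 3 ^ (n - 1) := by
  have hset1 : {C : List ℤ | (∀ c ∈ C, c ≠ 0) ∧ (C.map Int.natAbs).sum = n ∧
        (C.filter (fun c => c < 0)).length % 2 = n % 2}
      = ↑((SC n).filter (fun C => (C.filter (fun c => c < 0)).length % 2 = n % 2)) := by
    ext C
    simp only [Set.mem_setOf_eq, Finset.coe_filter, Set.mem_setOf_eq, mem_SC]
    tauto
  have hset2 : {C : List ℤ | (∀ c ∈ C, c ≠ 0) ∧ (C.map Int.natAbs).sum = n ∧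
        (C.filter (fun c => c < 0)).length % 2 = (n + 1) % 2}
      = ↑((SC n).filter (fun C => (C.filter (fun c => c < 0)).length % 2 = (n + 1) % 2)) := by
    ext C
    simp only [Set.mem_setOf_eq, Finset.coe_filter, Set.mem_setOf_eq, mem_SC]
    tauto
  rw [hset1, hset2, Set.ncard_coe_finset, Set.ncard_coe_finset]
  exact filter_card n hn
end

section
/- Let p be a prime. The number of p-regular bipartitions of n equals the number of p'-bipartitions of n. Here, for p = 2: a bipartition (λ⁺, λ⁻) is 2-regular iff every part of λ⁺ has multiplicity at most 1 and λ⁻ is empty; it is a 2'-bipartition iff λ⁺ is empty and λ⁻ has no even parts. For odd p: (λ⁺, λ⁻) is p-regular iff every part of λ⁺ and every part of λ⁻ has multiplicity at most p−1; it is a p'-bipartition iff no part of λ⁺ and no part of λ⁻ is divisible by p. -/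
/-- A bipartition of `n`: a pair of multisets of positive natural numbers
whose total sum is `n`. -/
def IsBipartition (n : ℕ) (bp : Multiset ℕ × Multiset ℕ) : Prop :=
  (∀ i ∈ bp.1, 0 < i) ∧ (∀ i ∈ bp.2, 0 < i) ∧ bp.1.sum + bp.2.sum = n

namespace GlaisherAux

/-- Glaisher expansion map: replace each part `i = a * p ^ k` (with `¬ p ∣ a`) by
`p ^ k` copies of `a`. -/
def fmap (p : ℕ) (μ : Multiset ℕ) : Multiset ℕ :=
  μ.bind fun i => Multiset.replicate (p ^ i.factorization p) (i / p ^ i.factorization p)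

/-- Inverse map: for each part `a` with multiplicity `m`, write `m` in base `p`
and create parts `a * p ^ k` with multiplicity the `k`-th digit. -/
def gmap (p : ℕ) (ν : Multiset ℕ) : Multiset ℕ :=
  ∑ a ∈ ν.toFinset, ∑ k ∈ Finset.range (ν.count a),
    Multiset.replicate (ν.count a / p ^ k % p) (a * p ^ k)

variable {p : ℕ}

lemma eq_mul_pow_iff (hp : p.Prime) {a k i : ℕ} (ha : 0 < a) (hpa : ¬ p ∣ a) (hi : 0 < i) :
    i = a * p ^ k ↔ i / p ^ i.factorization p = a ∧ i.factorization p = k := by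
  constructor
  · rintro rfl
    have hv : ((a * p ^ k).factorization) p = k := by
      rw [Nat.factorization_mul ha.ne' (pow_ne_zero _ hp.pos.ne')]
      simp [hp.factorization_pow, Nat.factorization_eq_zero_of_not_dvd hpa]
    rw [hv]
    exact ⟨Nat.mul_div_cancel a (pow_pos hp.pos k), rfl⟩
  · rintro ⟨h1, h2⟩
    rw [← Nat.ordProj_mul_ordCompl_eq_self i p, h1, h2, mul_comm]

lemma sum_fmap (p : ℕ) (μ : Multiset ℕ) : (fmap p μ).sum = μ.sum := by
  rw [fmap, Multiset.sum_bind]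
  have h : ∀ i : ℕ,
      (Multiset.replicate (p ^ i.factorization p) (i / p ^ i.factorization p)).sum = i := by
    intro i
    rw [Multiset.sum_replicate, smul_eq_mul, Nat.ordProj_mul_ordCompl_eq_self]
  simp only [h, Multiset.map_id']

lemma mem_fmap (hp : 0 < p) {j : ℕ} {μ : Multiset ℕ} :
    j ∈ fmap p μ ↔ ∃ i ∈ μ, j = i / p ^ i.factorization p := by
  simp only [fmap, Multiset.mem_bind, Multiset.mem_replicate]
  constructor
  · rintro ⟨i, hi, _, rfl⟩; exact ⟨i, hi, rfl⟩
  · rintro ⟨i, hi, rfl⟩; exact ⟨i, hi, (pow_pos hp _).ne', rfl⟩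

lemma count_fmap (hp : p.Prime) {a : ℕ} (ha : 0 < a) (hpa : ¬ p ∣ a) (μ : Multiset ℕ) (K : ℕ)
    (hK : ∀ i ∈ μ, 0 < i ∧ i.factorization p < K) :
    (fmap p μ).count a = ∑ k ∈ Finset.range K, p ^ k * μ.count (a * p ^ k) := by
  induction μ using Multiset.induction with
  | empty => simp [fmap]
  | cons i μ ih =>
    have hi := hK i (Multiset.mem_cons_self i μ)
    rw [fmap, Multiset.cons_bind, Multiset.count_add, ← fmap,
      ih (fun j hj => hK j (Multiset.mem_cons_of_mem hj)), Multiset.count_replicate]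
    have hsplit : ∀ k ∈ Finset.range K,
        p ^ k * (i ::ₘ μ).count (a * p ^ k)
          = p ^ k * μ.count (a * p ^ k) + (if a * p ^ k = i then p ^ k else 0) := by
      intro k _
      rw [Multiset.count_cons]
      split <;> ring
    rw [Finset.sum_congr rfl hsplit, Finset.sum_add_distrib]
    have key : ∀ k : ℕ, (a * p ^ k = i) ↔
        (i / p ^ i.factorization p = a ∧ k = i.factorization p) := by
      intro k
      rw [eq_comm, eq_mul_pow_iff hp ha hpa hi.1]
      constructor
      · rintro ⟨h1, h2⟩; exact ⟨h1, h2.symm⟩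
      · rintro ⟨h1, h2⟩; exact ⟨h1, h2.symm⟩
    have hE : (if i / p ^ i.factorization p = a then p ^ i.factorization p else 0)
        = ∑ k ∈ Finset.range K, (if a * p ^ k = i then p ^ k else 0) := by
      by_cases h : i / p ^ i.factorization p = a
      · simp only [key, h, true_and, if_pos]
        rw [Finset.sum_ite_eq' (Finset.range K) (i.factorization p) (fun k => p ^ k)]
        simp [Finset.mem_range.mpr hi.2]
      · simp [key, h]
    rw [hE]; ring

lemma sum_digits (hp : 1 < p) (m : ℕ) (K : ℕ) :
    ∑ k ∈ Finset.range K, p ^ k * (m / p ^ k % p) = m % p ^ K := by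
  induction K with
  | zero => simp [Nat.mod_one]
  | succ K ih =>
    rw [Finset.sum_range_succ, ih, pow_succ, Nat.mod_mul]

lemma digits_unique (hp : 1 < p) : ∀ K (d e : ℕ → ℕ), (∀ k, d k < p) → (∀ k, e k < p) →
    (∑ k ∈ Finset.range K, p ^ k * d k = ∑ k ∈ Finset.range K, p ^ k * e k) →
    ∀ k < K, d k = e k := by
  intro K
  induction K with
  | zero => omega
  | succ K ih =>
    intro d e hd he hsum
    rw [Finset.sum_range_succ', Finset.sum_range_succ'] at hsum
    simp only [pow_zero, one_mul] at hsum
    have hd' : ∀ k ∈ Finset.range K, p ^ (k + 1) * d (k + 1) = p * (p ^ k * d (k + 1)) := by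
      intro k _; ring
    have he' : ∀ k ∈ Finset.range K, p ^ (k + 1) * e (k + 1) = p * (p ^ k * e (k + 1)) := by
      intro k _; ring
    rw [Finset.sum_congr rfl hd', Finset.sum_congr rfl he', ← Finset.mul_sum,
      ← Finset.mul_sum] at hsum
    have h0 : d 0 = e 0 := by
      have h1 := congrArg (· % p) hsum
      simpa [Nat.mul_add_mod, Nat.mod_eq_of_lt (hd 0), Nat.mod_eq_of_lt (he 0)] using h1
    have hA : ∑ k ∈ Finset.range K, p ^ k * d (k + 1)
        = ∑ k ∈ Finset.range K, p ^ k * e (k + 1) := by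
      rw [h0] at hsum
      have := Nat.add_right_cancel hsum
      exact Nat.eq_of_mul_eq_mul_left (by omega) this
    intro k hk
    match k with
    | 0 => exact h0
    | k + 1 =>
      exact ih (fun j => d (j + 1)) (fun j => e (j + 1)) (fun j => hd (j + 1))
        (fun j => he (j + 1)) hA k (by omega)

lemma fact_lt (hp : 1 < p) {i S : ℕ} (hi : 0 < i) (hiS : i ≤ S) :
    i.factorization p < S + 1 := by
  have h1 : p ^ i.factorization p ≤ i := Nat.ordProj_le p hi.ne'
  have h2 : S + 1 < 2 ^ (S + 1) := Nat.lt_two_pow_self (n := S + 1)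
  have h3 : (2 : ℕ) ^ (S + 1) ≤ p ^ (S + 1) := Nat.pow_le_pow_left (by omega) _
  have : p ^ i.factorization p < p ^ (S + 1) := by omega
  exact (Nat.pow_lt_pow_iff_right hp).mp this

lemma count_le_sum {b : ℕ} (hb : 0 < b) (ν : Multiset ℕ) : ν.count b ≤ ν.sum := by
  induction ν using Multiset.induction with
  | empty => simp
  | cons a ν ih =>
    rw [Multiset.count_cons, Multiset.sum_cons]
    by_cases h : b = a
    · subst h; rw [if_pos rfl]; omega
    · rw [if_neg h]; omega

lemma nat_lt_pow (hp : 1 < p) (m : ℕ) : m < p ^ m :=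
  lt_of_lt_of_le (Nat.lt_two_pow_self (n := m)) (Nat.pow_le_pow_left hp m)

lemma fmap_parts (hp : p.Prime) {μ : Multiset ℕ} (hμ : ∀ i ∈ μ, 0 < i) :
    ∀ j ∈ fmap p μ, 0 < j ∧ ¬ p ∣ j := by
  intro j hj
  obtain ⟨i, hi, rfl⟩ := (mem_fmap hp.pos).mp hj
  exact ⟨Nat.ordCompl_pos p (hμ i hi).ne', Nat.not_dvd_ordCompl hp (hμ i hi).ne'⟩

lemma fmap_injOn (hp : p.Prime) {μ μ' : Multiset ℕ}
    (hμ : ∀ i ∈ μ, 0 < i) (hc : ∀ i, μ.count i < p)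
    (hμ' : ∀ i ∈ μ', 0 < i) (hc' : ∀ i, μ'.count i < p)
    (h : fmap p μ = fmap p μ') : μ = μ' := by
  have hp1 : 1 < p := hp.one_lt
  ext b
  rcases Nat.eq_zero_or_pos b with rfl | hb
  · rw [Multiset.count_eq_zero.mpr (fun hmem => (hμ 0 hmem).false),
      Multiset.count_eq_zero.mpr (fun hmem => (hμ' 0 hmem).false)]
  set S := μ.sum + μ'.sum with hS
  set K := S + 1 with hKdef
  have hbdμ : ∀ i ∈ μ, 0 < i ∧ i.factorization p < K := by
    intro i hi
    refine ⟨hμ i hi, fact_lt hp1 (hμ i hi) ?_⟩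
    have := Multiset.single_le_sum (fun x _ => Nat.zero_le x) i hi
    omega
  have hbdμ' : ∀ i ∈ μ', 0 < i ∧ i.factorization p < K := by
    intro i hi
    refine ⟨hμ' i hi, fact_lt hp1 (hμ' i hi) ?_⟩
    have := Multiset.single_le_sum (fun x _ => Nat.zero_le x) i hi
    omega
  by_cases hvb : b.factorization p < K
  · set a := b / p ^ b.factorization p with ha
    have ha0 : 0 < a := Nat.ordCompl_pos p hb.ne'
    have hpa : ¬ p ∣ a := Nat.not_dvd_ordCompl hp hb.ne'
    have e1 := count_fmap hp ha0 hpa μ K hbdμ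
    have e2 := count_fmap hp ha0 hpa μ' K hbdμ'
    rw [h, e2] at e1
    have := digits_unique hp1 K (fun k => μ.count (a * p ^ k)) (fun k => μ'.count (a * p ^ k))
      (fun k => hc _) (fun k => hc' _) e1.symm (b.factorization p) hvb
    have h3 : μ.count (a * p ^ b.factorization p) = μ'.count (a * p ^ b.factorization p) := this
    have hab : a * p ^ b.factorization p = b := by
      rw [ha, mul_comm, Nat.ordProj_mul_ordCompl_eq_self]
    rwa [hab] at h3
  · have hbig : ∀ (ν : Multiset ℕ), (∀ i ∈ ν, 0 < i) → ν.sum ≤ S → ν.count b = 0 := by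
      intro ν hν hνS
      rw [Multiset.count_eq_zero]
      intro hmem
      have h1 : b ≤ ν.sum := Multiset.single_le_sum (fun x _ => Nat.zero_le x) b hmem
      exact hvb (fact_lt hp1 hb (by omega))
    rw [hbig μ hμ (by omega), hbig μ' hμ' (by omega)]

lemma count_gmap (hp : p.Prime) {ν : Multiset ℕ} (hν : ∀ i ∈ ν, 0 < i ∧ ¬ p ∣ i) {b : ℕ}
    (hb : 0 < b) :
    (gmap p ν).count b
      = ν.count (b / p ^ b.factorization p) / p ^ b.factorization p % p := by
  have hp1 : 1 < p := hp.one_lt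
  rw [gmap, Multiset.count_sum']
  have step : ∀ a ∈ ν.toFinset,
      Multiset.count b (∑ k ∈ Finset.range (ν.count a),
        Multiset.replicate (ν.count a / p ^ k % p) (a * p ^ k))
      = if a = b / p ^ b.factorization p
          then ν.count a / p ^ b.factorization p % p else 0 := by
    intro a hat
    have haν := hν a (Multiset.mem_toFinset.mp hat)
    rw [Multiset.count_sum']
    simp only [Multiset.count_replicate]
    by_cases hca : a = b / p ^ b.factorization p
    · have hcond : ∀ k : ℕ, (a * p ^ k = b) ↔ (k = b.factorization p) := by
        intro k
        rw [eq_comm, eq_mul_pow_iff hp haν.1 haν.2 hb]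
        constructor
        · rintro ⟨_, h2⟩; exact h2.symm
        · rintro rfl; exact ⟨hca.symm, rfl⟩
      simp only [hcond]
      rw [Finset.sum_ite_eq' (Finset.range (ν.count a)) (b.factorization p)
        (fun k => ν.count a / p ^ k % p), if_pos hca]
      by_cases hin : b.factorization p ∈ Finset.range (ν.count a)
      · rw [if_pos hin]
      · rw [if_neg hin]
        have h1 : ν.count a ≤ b.factorization p := by
          simpa [Finset.mem_range, not_lt] using hin
        have h2 : ν.count a < p ^ b.factorization p :=
          lt_of_le_of_lt h1 (nat_lt_pow hp1 _)
        rw [Nat.div_eq_of_lt h2, Nat.zero_mod]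
    · rw [if_neg hca]
      apply Finset.sum_eq_zero
      intro k _
      rw [if_neg]
      intro habk
      exact hca (((eq_mul_pow_iff hp haν.1 haν.2 hb).mp habk.symm).1.symm)
  rw [Finset.sum_congr rfl step,
    Finset.sum_ite_eq' ν.toFinset (b / p ^ b.factorization p)
      (fun a => ν.count a / p ^ b.factorization p % p)]
  by_cases hmem : b / p ^ b.factorization p ∈ ν.toFinset
  · rw [if_pos hmem]
  · rw [if_neg hmem]
    rw [Multiset.count_eq_zero.mpr (fun hc => hmem (Multiset.mem_toFinset.mpr hc))]
    simp

lemma multiset_sum_sum {ι : Type*} (s : Finset ι) (f : ι → Multiset ℕ) :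
    (∑ i ∈ s, f i).sum = ∑ i ∈ s, (f i).sum := by
  classical
  induction s using Finset.induction with
  | empty => simp
  | insert x s hx ih => simp [Finset.sum_insert hx, ih]

lemma sum_gmap (hp : 1 < p) (ν : Multiset ℕ) : (gmap p ν).sum = ν.sum := by
  rw [gmap, multiset_sum_sum]
  have inner : ∀ a : ℕ,
      (∑ k ∈ Finset.range (ν.count a),
        Multiset.replicate (ν.count a / p ^ k % p) (a * p ^ k)).sum
      = ν.count a * a := by
    intro a
    rw [multiset_sum_sum]
    have : ∀ k ∈ Finset.range (ν.count a),
        (Multiset.replicate (ν.count a / p ^ k % p) (a * p ^ k)).sum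
          = a * (p ^ k * (ν.count a / p ^ k % p)) := by
      intro k _
      rw [Multiset.sum_replicate, smul_eq_mul]; ring
    rw [Finset.sum_congr rfl this, ← Finset.mul_sum, sum_digits hp,
      Nat.mod_eq_of_lt (lt_of_lt_of_le Nat.lt_two_pow_self (Nat.pow_le_pow_left hp _)),
      mul_comm]
  rw [Finset.sum_congr rfl (fun a _ => inner a)]
  have := Finset.sum_multiset_map_count ν (id : ℕ → ℕ)
  simp only [Multiset.map_id', id, smul_eq_mul] at this
  exact this.symm

lemma gmap_parts (hp0 : 0 < p) {ν : Multiset ℕ} (hν : ∀ i ∈ ν, 0 < i) :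
    ∀ j ∈ gmap p ν, 0 < j := by
  intro j hj
  rw [gmap, Multiset.mem_sum] at hj
  obtain ⟨a, ha, hj⟩ := hj
  rw [Multiset.mem_sum] at hj
  obtain ⟨k, _, hj⟩ := hj
  rw [Multiset.mem_replicate] at hj
  rcases hj with ⟨hne, rfl⟩
  have ha0 := hν a (Multiset.mem_toFinset.mp ha)
  exact Nat.mul_pos ha0 (pow_pos hp0 k)

lemma gmap_counts (hp : p.Prime) {ν : Multiset ℕ} (hν : ∀ i ∈ ν, 0 < i ∧ ¬ p ∣ i) :
    ∀ b, (gmap p ν).count b < p := by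
  intro b
  rcases Nat.eq_zero_or_pos b with rfl | hb
  · rw [Multiset.count_eq_zero.mpr]
    · exact hp.pos
    · intro hmem
      exact absurd (gmap_parts hp.pos (fun i hi => (hν i hi).1) 0 hmem) (lt_irrefl 0)
  · rw [count_gmap hp hν hb]
    exact Nat.mod_lt _ hp.pos

lemma fmap_gmap (hp : p.Prime) {ν : Multiset ℕ} (hν : ∀ i ∈ ν, 0 < i ∧ ¬ p ∣ i) :
    fmap p (gmap p ν) = ν := by
  have hp1 : 1 < p := hp.one_lt
  have hgpos : ∀ j ∈ gmap p ν, 0 < j := gmap_parts hp.pos (fun i hi => (hν i hi).1)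
  ext b
  rcases Nat.eq_zero_or_pos b with rfl | hb
  · rw [Multiset.count_eq_zero.mpr, Multiset.count_eq_zero.mpr]
    · exact fun hmem => absurd ((hν 0 hmem).1) (lt_irrefl 0)
    · intro hmem
      exact absurd ((fmap_parts hp hgpos) 0 hmem).1 (lt_irrefl 0)
  by_cases hpb : p ∣ b
  · rw [Multiset.count_eq_zero.mpr, Multiset.count_eq_zero.mpr]
    · exact fun hmem => (hν b hmem).2 hpb
    · exact fun hmem => ((fmap_parts hp hgpos) b hmem).2 hpb
  · set K := (gmap p ν).sum + 1 with hK
    have hbd : ∀ i ∈ gmap p ν, 0 < i ∧ i.factorization p < K := by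
      intro i hi
      refine ⟨hgpos i hi, fact_lt hp1 (hgpos i hi) ?_⟩
      exact Multiset.single_le_sum (fun x _ => Nat.zero_le x) i hi
    rw [count_fmap hp hb hpb _ K hbd]
    have hterm : ∀ k ∈ Finset.range K,
        p ^ k * (gmap p ν).count (b * p ^ k) = p ^ k * (ν.count b / p ^ k % p) := by
      intro k _
      have hbpk : 0 < b * p ^ k := Nat.mul_pos hb (pow_pos hp.pos k)
      have hfac := (eq_mul_pow_iff hp hb hpb hbpk).mp rfl
      rw [count_gmap hp hν hbpk, hfac.1, hfac.2]
    rw [Finset.sum_congr rfl hterm, sum_digits hp1]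
    apply Nat.mod_eq_of_lt
    have h1 : ν.count b ≤ ν.sum := count_le_sum hb ν
    have h2 : ν.sum = (gmap p ν).sum := (sum_gmap hp1 ν).symm
    have h3 : K < p ^ K := nat_lt_pow hp1 K
    omega

end GlaisherAux

open GlaisherAux in
/-- For a prime `p`, the number of `p`-regular bipartitions of `n` equals the number of
`p'`-bipartitions of `n`, where the notions are as described (with a special definition
for `p = 2`). -/
theorem card_pRegular_eq_card_pPrime (n p : ℕ) (hp : p.Prime) :
    (if p = 2 then
      Set.ncard {bp : Multiset ℕ × Multiset ℕ | IsBipartition n bp ∧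
          (∀ i, bp.1.count i ≤ 1) ∧ bp.2 = 0} =
      Set.ncard {bp : Multiset ℕ × Multiset ℕ | IsBipartition n bp ∧
          bp.1 = 0 ∧ ∀ i ∈ bp.2, ¬ 2 ∣ i}
    else
      Set.ncard {bp : Multiset ℕ × Multiset ℕ | IsBipartition n bp ∧
          (∀ i, bp.1.count i ≤ p - 1 ∧ bp.2.count i ≤ p - 1)} =
      Set.ncard {bp : Multiset ℕ × Multiset ℕ | IsBipartition n bp ∧
          (∀ i ∈ bp.1, ¬ p ∣ i) ∧ (∀ i ∈ bp.2, ¬ p ∣ i)}) := by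
  by_cases hp2 : p = 2
  · -- p = 2
    subst hp2
    rw [if_pos rfl]
    set S : Set (Multiset ℕ × Multiset ℕ) := {bp | IsBipartition n bp ∧
      (∀ i, bp.1.count i ≤ 1) ∧ bp.2 = 0} with hSdef
    set T : Set (Multiset ℕ × Multiset ℕ) := {bp | IsBipartition n bp ∧
      bp.1 = 0 ∧ ∀ i ∈ bp.2, ¬ 2 ∣ i} with hTdef
    have hprime : Nat.Prime 2 := Nat.prime_two
    set F : Multiset ℕ × Multiset ℕ → Multiset ℕ × Multiset ℕ :=
      fun bp => ((0 : Multiset ℕ), fmap 2 bp.1) with hF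
    have himg : T = F '' S := by
      ext bp
      constructor
      · rintro ⟨⟨_, hpos2, hsum⟩, h1, h2⟩
        refine ⟨(gmap 2 bp.2, 0), ?_, ?_⟩
        · have hν : ∀ i ∈ bp.2, 0 < i ∧ ¬ 2 ∣ i := fun i hi => ⟨hpos2 i hi, h2 i hi⟩
          refine ⟨⟨gmap_parts (by norm_num) hpos2, by simp, ?_⟩, ?_, rfl⟩
          · simp only
            rw [Multiset.sum_zero, add_zero, sum_gmap (by norm_num)]
            rw [h1] at hsum
            simpa using hsum
          · intro i
            show Multiset.count i (gmap 2 bp.2) ≤ 1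
            have := gmap_counts hprime hν i
            omega
        · simp only [hF]
          rw [fmap_gmap hprime (fun i hi => ⟨hpos2 i hi, h2 i hi⟩)]
          exact Prod.ext h1.symm rfl
      · rintro ⟨bq, ⟨⟨hpos1, _, hsum⟩, hcount, h2⟩, rfl⟩
        have hparts := fmap_parts hprime hpos1
        refine ⟨⟨by simp [hF], fun i hi => (hparts i hi).1, ?_⟩, rfl, fun i hi => (hparts i hi).2⟩
        simp only [hF]
        rw [Multiset.sum_zero, zero_add, sum_fmap]
        rw [h2] at hsum
        simpa using hsum
    have hinj : Set.InjOn F S := by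
      rintro bp hbp bp' hbp' heq
      obtain ⟨⟨hpos1, _, _⟩, hcount, h2⟩ := hbp
      obtain ⟨⟨hpos1', _, _⟩, hcount', h2'⟩ := hbp'
      have heq1 : fmap 2 bp.1 = fmap 2 bp'.1 := congrArg Prod.snd heq
      have := fmap_injOn hprime hpos1 (fun i => by have := hcount i; omega)
        hpos1' (fun i => by have := hcount' i; omega) heq1
      exact Prod.ext this (h2.trans h2'.symm)
    rw [himg, Set.ncard_image_of_injOn hinj]
  · -- p odd prime
    rw [if_neg hp2]
    have hp1 : 1 < p := hp.one_lt
    set S : Set (Multiset ℕ × Multiset ℕ) := {bp | IsBipartition n bp ∧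
      (∀ i, bp.1.count i ≤ p - 1 ∧ bp.2.count i ≤ p - 1)} with hSdef
    set T : Set (Multiset ℕ × Multiset ℕ) := {bp | IsBipartition n bp ∧
      (∀ i ∈ bp.1, ¬ p ∣ i) ∧ (∀ i ∈ bp.2, ¬ p ∣ i)} with hTdef
    set F : Multiset ℕ × Multiset ℕ → Multiset ℕ × Multiset ℕ :=
      fun bp => (fmap p bp.1, fmap p bp.2) with hF
    have himg : T = F '' S := by
      ext bp
      constructor
      · rintro ⟨⟨hpos1, hpos2, hsum⟩, h1, h2⟩
        have hν1 : ∀ i ∈ bp.1, 0 < i ∧ ¬ p ∣ i := fun i hi => ⟨hpos1 i hi, h1 i hi⟩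
        have hν2 : ∀ i ∈ bp.2, 0 < i ∧ ¬ p ∣ i := fun i hi => ⟨hpos2 i hi, h2 i hi⟩
        refine ⟨(gmap p bp.1, gmap p bp.2), ⟨⟨gmap_parts hp.pos hpos1, gmap_parts hp.pos hpos2, ?_⟩, ?_⟩, ?_⟩
        · simp only
          rw [sum_gmap hp1, sum_gmap hp1]
          exact hsum
        · intro i
          show Multiset.count i (gmap p bp.1) ≤ p - 1 ∧ Multiset.count i (gmap p bp.2) ≤ p - 1
          have c1 := gmap_counts hp hν1 i
          have c2 := gmap_counts hp hν2 i
          omega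
        · simp only [hF]
          rw [fmap_gmap hp hν1, fmap_gmap hp hν2]
      · rintro ⟨bq, ⟨⟨hpos1, hpos2, hsum⟩, hcount⟩, rfl⟩
        have hparts1 := fmap_parts hp hpos1
        have hparts2 := fmap_parts hp hpos2
        refine ⟨⟨fun i hi => (hparts1 i hi).1, fun i hi => (hparts2 i hi).1, ?_⟩,
          fun i hi => (hparts1 i hi).2, fun i hi => (hparts2 i hi).2⟩
        simp only [hF]
        rw [sum_fmap, sum_fmap]
        exact hsum
    have hinj : Set.InjOn F S := by
      rintro bp hbp bp' hbp' heq
      obtain ⟨⟨hpos1, hpos2, _⟩, hcount⟩ := hbp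
      obtain ⟨⟨hpos1', hpos2', _⟩, hcount'⟩ := hbp'
      have e1 : fmap p bp.1 = fmap p bp'.1 := congrArg Prod.fst heq
      have e2 : fmap p bp.2 = fmap p bp'.2 := congrArg Prod.snd heq
      refine Prod.ext ?_ ?_
      · exact fmap_injOn hp hpos1 (fun i => by have := (hcount i).1; omega)
          hpos1' (fun i => by have := (hcount' i).1; omega) e1
      · exact fmap_injOn hp hpos2 (fun i => by have := (hcount i).2; omega)
          hpos2' (fun i => by have := (hcount' i).2; omega) e2
    rw [himg, Set.ncard_image_of_injOn hinj]
end

section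
/- Let K be a linearly ordered field, m ≥ 1, and M an upper triangular m×m matrix over K with all diagonal entries positive. Then for every r ≥ 1, the centralizer of M in the full matrix algebra Mat_m(K) equals the centralizer of M^r. -/
open Finset

lemma tri_pow {K : Type} [Field K] [LinearOrder K] [IsStrictOrderedRing K] {m : ℕ}
    {M : Matrix (Fin m) (Fin m) K} (htri : M.BlockTriangular (id : Fin m → Fin m))
    (a : ℕ) : (M ^ a).BlockTriangular (id : Fin m → Fin m) := by
  induction a with
  | zero => simpa using Matrix.blockTriangular_one
  | succ n ih => rw [pow_succ]; exact ih.mul htri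

lemma diag_pow {K : Type} [Field K] [LinearOrder K] [IsStrictOrderedRing K] {m : ℕ}
    {M : Matrix (Fin m) (Fin m) K} (htri : M.BlockTriangular (id : Fin m → Fin m))
    (a : ℕ) (i : Fin m) : (M ^ a) i i = (M i i) ^ a := by
  induction a with
  | zero => simp [Matrix.one_apply]
  | succ n ih =>
    rw [pow_succ, Matrix.mul_apply, Finset.sum_eq_single i]
    · rw [ih, pow_succ]
    · intro k _ hk
      rcases lt_or_gt_of_ne hk with h1 | h2
      · rw [tri_pow htri n (show (id k : Fin m) < id i from h1), zero_mul]
      · rw [htri (show (id i : Fin m) < id k from h2), mul_zero]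
    · intro h; exact absurd (Finset.mem_univ i) h

lemma key_zero {K : Type} [Field K] [LinearOrder K] [IsStrictOrderedRing K] {m : ℕ}
    {M : Matrix (Fin m) (Fin m) K} (htri : M.BlockTriangular (id : Fin m → Fin m))
    (hdiag : ∀ i, 0 < M i i) {r : ℕ} (hr : 1 ≤ r)
    (Y : Matrix (Fin m) (Fin m) K)
    (hY : ∑ a ∈ Finset.range r, M ^ a * Y * M ^ (r - 1 - a) = 0) : Y = 0 := by
  have key : ∀ n : ℕ, ∀ i j : Fin m, (m - (i : ℕ)) + (j : ℕ) < n → Y i j = 0 := by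
    intro n
    induction n with
    | zero => intro i j h; omega
    | succ n ih =>
      intro i j hij
      have h0 : ∑ a ∈ Finset.range r, (M ^ a * Y * M ^ (r - 1 - a)) i j = 0 := by
        rw [← Matrix.sum_apply, hY]; rfl
      have hterm : ∀ a ∈ Finset.range r,
          (M ^ a * Y * M ^ (r - 1 - a)) i j
            = (M i i) ^ a * (M j j) ^ (r - 1 - a) * Y i j := by
        intro a _
        rw [Matrix.mul_apply, Finset.sum_eq_single j]
        · rw [Matrix.mul_apply, Finset.sum_eq_single i]
          · rw [diag_pow htri, diag_pow htri]; ring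
          · intro k _ hk
            rcases lt_or_gt_of_ne hk with h1 | h2
            · -- k < i : (M^a) i k = 0
              rw [tri_pow htri a (show (id k : Fin m) < id i from h1), zero_mul]
            · -- k > i : Y k j = 0 by ih
              have : Y k j = 0 := by
                apply ih
                have hk2 : (k : ℕ) < m := k.isLt
                have : (i : ℕ) < (k : ℕ) := h2
                omega
              rw [this, mul_zero]
          · intro h; exact absurd (Finset.mem_univ i) h
        · intro l _ hl
          rcases lt_or_gt_of_ne hl with h1 | h2
          · -- l < j : (M^a * Y) i l = 0
            have : (M ^ a * Y) i l = 0 := by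
              rw [Matrix.mul_apply]
              apply Finset.sum_eq_zero
              intro k _
              rcases lt_or_ge (k : ℕ) (i : ℕ) with hk | hk
              · rw [tri_pow htri a (show (id k : Fin m) < id i from hk), zero_mul]
              · have : Y k l = 0 := by
                  apply ih
                  have : (l : ℕ) < (j : ℕ) := h1
                  omega
                rw [this, mul_zero]
            rw [this, zero_mul]
          · -- l > j : (M^{r-1-a}) l j = 0
            rw [tri_pow htri (r - 1 - a) (show (id j : Fin m) < id l from h2), mul_zero]
        · intro h; exact absurd (Finset.mem_univ j) h
      rw [Finset.sum_congr rfl hterm, ← Finset.sum_mul] at h0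
      have hpos : 0 < ∑ a ∈ Finset.range r, (M i i) ^ a * (M j j) ^ (r - 1 - a) := by
        apply Finset.sum_pos
        · intro a _
          exact mul_pos (pow_pos (hdiag i) a) (pow_pos (hdiag j) _)
        · exact Finset.nonempty_range_iff.mpr (by omega)
      rcases mul_eq_zero.mp h0 with h | h
      · exact absurd h hpos.ne'
      · exact h
  ext i j
  exact key (m + m + 1) i j (by have := i.isLt; have := j.isLt; omega)

/-- Let `K` be a linearly ordered field and `M` an upper triangular `m × m` matrix over `K`
with positive diagonal entries. Then for every `r ≥ 1` the centralizer of `M` in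
`Mat_m(K)` equals the centralizer of `M ^ r`. -/
theorem centralizer_triangular_pow (K : Type) [Field K] [LinearOrder K] [IsStrictOrderedRing K] (m : ℕ) (hm : 1 ≤ m)
    (M : Matrix (Fin m) (Fin m) K) (htri : M.BlockTriangular (id : Fin m → Fin m))
    (hdiag : ∀ i, 0 < M i i) (r : ℕ) (hr : 1 ≤ r) :
    {X : Matrix (Fin m) (Fin m) K | X * M = M * X} =
      {X : Matrix (Fin m) (Fin m) K | X * M ^ r = M ^ r * X} := by
  ext X
  simp only [Set.mem_setOf_eq]
  constructor
  · intro h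
    exact (Commute.pow_right h r)
  · intro h
    set Y := X * M - M * X with hYdef
    have hsum : ∑ a ∈ Finset.range r, M ^ a * Y * M ^ (r - 1 - a) = 0 := by
      have tel : ∀ a ∈ Finset.range r,
          M ^ a * Y * M ^ (r - 1 - a)
            = (M ^ a * X * M ^ (r - a)) - (M ^ (a + 1) * X * M ^ (r - (a + 1))) := by
        intro a ha
        have ha' : a < r := Finset.mem_range.mp ha
        have h1 : r - a = (r - 1 - a) + 1 := by omega
        have h2 : r - (a + 1) = r - 1 - a := by omega
        rw [hYdef, h1, h2, pow_succ']
        noncomm_ring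
      rw [Finset.sum_congr rfl tel, Finset.sum_range_sub']
      simp only [pow_zero, one_mul, Nat.sub_self, Nat.sub_zero, pow_zero, mul_one]
      rw [h, sub_self]
    have hY0 : Y = 0 := key_zero htri hdiag hr Y hsum
    have := sub_eq_zero.mp hY0
    exact this
end

section
/- Let K be a linearly ordered field and let S be an invertible diagonalizable matrix over K all of whose eigenvalues are positive elements of K. Then for every r ≥ 1, the centralizer of S in Mat_m(K) equals the centralizer of S^r. -/
lemma pow_inj_of_pos {K : Type} [Field K] [LinearOrder K] [IsStrictOrderedRing K] {x y : K} (hx : 0 < x) (hy : 0 < y)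
    {r : ℕ} (hr : 1 ≤ r) (h : x ^ r = y ^ r) : x = y := by
  rcases lt_trichotomy x y with hlt | heq | hgt
  · exact absurd h (ne_of_lt (pow_lt_pow_left₀ hlt hx.le (by omega)))
  · exact heq
  · exact absurd h.symm (ne_of_lt (pow_lt_pow_left₀ hgt hy.le (by omega)))

lemma conj_mul_aux {R : Type*} [Ring R] {P Q : R} (hQP : Q * P = 1) (A B : R) :
    (P * A * Q) * (P * B * Q) = P * (A * B) * Q := by
  have h : (P * A * Q) * (P * B * Q) = P * A * (Q * P) * B * Q := by noncomm_ring
  rw [h, hQP]; noncomm_ring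

lemma conj_pow_aux {R : Type*} [Ring R] {P Q : R} (hPQ : P * Q = 1) (hQP : Q * P = 1)
    (A : R) (r : ℕ) : (P * A * Q) ^ r = P * A ^ r * Q := by
  induction r with
  | zero => simp [hPQ]
  | succ n ih => rw [pow_succ, pow_succ, ih, conj_mul_aux hQP]

/-- Let `K` be a linearly ordered field and `S` a diagonalizable (hence invertible)
matrix over `K` all of whose eigenvalues are positive. Then for every `r ≥ 1` the
centralizer of `S` in `Mat_m(K)` equals the centralizer of `S ^ r`. -/
theorem centralizer_posDiagonalizable_pow (K : Type) [Field K] [LinearOrder K] [IsStrictOrderedRing K] (m : ℕ)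
    (S P : Matrix (Fin m) (Fin m) K) (d : Fin m → K) (hP : IsUnit P)
    (hd : ∀ i, 0 < d i) (hS : S = P * Matrix.diagonal d * P⁻¹) (r : ℕ) (hr : 1 ≤ r) :
    {X : Matrix (Fin m) (Fin m) K | X * S = S * X} =
      {X : Matrix (Fin m) (Fin m) K | X * S ^ r = S ^ r * X} := by
  have hdet : IsUnit P.det := (Matrix.isUnit_iff_isUnit_det P).mp hP
  have hPP : P * P⁻¹ = 1 := Matrix.mul_nonsing_inv P hdet
  have hPP' : P⁻¹ * P = 1 := Matrix.nonsing_inv_mul P hdet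
  ext X
  simp only [Set.mem_setOf_eq]
  constructor
  · intro h
    exact (Commute.pow_right h r)
  · intro h
    set Y := P⁻¹ * X * P with hY
    set D := Matrix.diagonal d with hD
    have hSpow : S ^ r = P * D ^ r * P⁻¹ := by
      rw [hS, conj_pow_aux hPP hPP']
    have hXY : X = P * Y * P⁻¹ := by
      rw [hY, show P * (P⁻¹ * X * P) * P⁻¹ = (P * P⁻¹) * X * (P * P⁻¹) by noncomm_ring,
        hPP]
      simp
    -- Y commutes with D^r
    have hYcomm : Y * D ^ r = D ^ r * Y := by
      have h1 : (P * Y * P⁻¹) * (P * D ^ r * P⁻¹) = (P * D ^ r * P⁻¹) * (P * Y * P⁻¹) := by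
        rw [← hXY, ← hSpow]; exact h
      rw [conj_mul_aux hPP', conj_mul_aux hPP'] at h1
      have h2 := congrArg (fun M => P⁻¹ * M * P) h1
      simpa only [show ∀ A : Matrix (Fin m) (Fin m) K, P⁻¹ * (P * A * P⁻¹) * P = A by
        intro A
        rw [show P⁻¹ * (P * A * P⁻¹) * P = (P⁻¹ * P) * A * (P⁻¹ * P) by noncomm_ring, hPP']
        simp] using h2
    have hdiagpow : D ^ r = Matrix.diagonal (fun i => d i ^ r) := by
      rw [hD, Matrix.diagonal_pow]
      rfl
    rw [hdiagpow] at hYcomm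
    have hYD : Y * D = D * Y := by
      ext i j
      have hij := congrFun (congrFun hYcomm i) j
      simp only [Matrix.mul_diagonal, Matrix.diagonal_mul] at hij
      rw [hD]
      simp only [Matrix.mul_diagonal, Matrix.diagonal_mul]
      by_cases hYij : Y i j = 0
      · simp [hYij]
      · have hdr : d j ^ r = d i ^ r := by
          rw [mul_comm (d i ^ r) (Y i j)] at hij
          exact mul_left_cancel₀ hYij hij
        have : d j = d i := pow_inj_of_pos (hd j) (hd i) hr hdr
        rw [this]; ring
    rw [hXY, hS, conj_mul_aux hPP', conj_mul_aux hPP', hYD]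
end

section
/- Let W_n = S_n ⋉ (ℤ/2ℤ)^n be the hyperoctahedral group, K a field of characteristic 0, and for I ⊆ {1,…,n} define γ_I : W_n → K by γ_I(σ) = (−1)^{|I| − |I ∩ I(σ)|}, where I(σ) = {i ∈ {1,…,n} : σ(i) > 0}, and set y_I = (1/2^{|I|}) Σ_{σ ∈ W_n} γ_I(σ)·σ in K·W_n. Then for I, J ⊆ {1,…,n}: y_I · y_J = 2^{n−|I|}·|I|!·(n−|I|)!·y_J if |I| = |J|, and y_I · y_J = 0 if |I| ≠ |J|. -/
/-- The set `{±1, …, ±n}`, realized as nonzero integers of absolute value at most `n`. -/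
abbrev SignedSet (n : ℕ) := {x : ℤ // x ≠ 0 ∧ -(n : ℤ) ≤ x ∧ x ≤ (n : ℤ)}

noncomputable instance signedSetFintype (n : ℕ) : Fintype (SignedSet n) :=
  Fintype.subtype ((Finset.Icc (-(n : ℤ)) (n : ℤ)).filter fun x => x ≠ 0)
    (by intro x; simp [Finset.mem_Icc]; tauto)

/-- The negation involution `i ↦ -i` on `{±1, …, ±n}`. -/
def negX (n : ℕ) : Equiv.Perm (SignedSet n) where
  toFun x := ⟨-x.1, by obtain ⟨h1, h2, h3⟩ := x.2; exact ⟨by omega, by omega, by omega⟩⟩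
  invFun x := ⟨-x.1, by obtain ⟨h1, h2, h3⟩ := x.2; exact ⟨by omega, by omega, by omega⟩⟩
  left_inv x := Subtype.ext (by simp)
  right_inv x := Subtype.ext (by simp)

/-- The hyperoctahedral group `W_n`: permutations `σ` of `{±1, …, ±n}` such that
`σ(-i) = -σ(i)` for all `i`. -/
def hyperoctahedral (n : ℕ) : Subgroup (Equiv.Perm (SignedSet n)) where
  carrier := {σ | ∀ x : SignedSet n, (σ (negX n x)).1 = -(σ x).1}
  one_mem' := fun _ => rfl
  mul_mem' := by
    intro a b ha hb x
    have h1 : b (negX n x) = negX n (b x) := Subtype.ext ((hb x).trans rfl)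
    show (a (b (negX n x))).1 = -(a (b x)).1
    rw [h1]; exact ha (b x)
  inv_mem' := by
    intro a ha y
    have key : ∀ z, a (negX n z) = negX n (a z) := fun z => Subtype.ext ((ha z).trans rfl)
    have h1 : a (negX n (a⁻¹ y)) = negX n y := by rw [key, Equiv.Perm.inv_def, Equiv.apply_symm_apply]
    have h2 : a⁻¹ (negX n y) = negX n (a⁻¹ y) := by
      conv_lhs => rw [← h1]
      exact Equiv.symm_apply_apply a _
    show (a⁻¹ (negX n y)).1 = -(a⁻¹ y).1
    rw [h2]; rfl

noncomputable instance (n : ℕ) : Fintype (hyperoctahedral n) := Fintype.ofFinite _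

/-- The element of `{±1, …, ±n}` corresponding to `i + 1` for `i : Fin n`. -/
def embPos (n : ℕ) (i : Fin n) : SignedSet n :=
  ⟨((i : ℕ) : ℤ) + 1, by
    have h : ((i : ℕ) : ℤ) < (n : ℤ) := by exact_mod_cast i.isLt
    have h0 : (0 : ℤ) ≤ ((i : ℕ) : ℤ) := Int.natCast_nonneg _
    exact ⟨by omega, by omega, by omega⟩⟩

/-- `I(σ) = {i ∈ {1, …, n} : σ(i) > 0}`. -/
def posIdx (n : ℕ) (σ : hyperoctahedral n) : Finset (Fin n) :=
  Finset.univ.filter fun i => 0 < ((σ : Equiv.Perm (SignedSet n)) (embPos n i)).1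

/-- `y_I = (1/2^{|I|}) Σ_{σ ∈ W_n} γ_I(σ)·σ`, where
`γ_I(σ) = (−1)^{|I| − |I ∩ I(σ)|}`. -/
noncomputable def yElt (n : ℕ) (K : Type) [Field K] (I : Finset (Fin n)) :
    MonoidAlgebra K (hyperoctahedral n) :=
  ((2 : K) ^ I.card)⁻¹ •
    ∑ σ : hyperoctahedral n,
      MonoidAlgebra.single σ ((-1 : K) ^ (I.card - (I ∩ posIdx n σ).card))

section HypAux

open Finset Equiv

variable {n : ℕ}

namespace HypAux

/-- The element `±(i+1)` of `SignedSet n`. -/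
def mk (n : ℕ) (i : Fin n) (b : Bool) : SignedSet n :=
  ⟨(if b then 1 else -1) * (((i : ℕ) : ℤ) + 1), by
    have h : ((i : ℕ) : ℤ) < (n : ℤ) := by exact_mod_cast i.isLt
    have h0 : (0 : ℤ) ≤ ((i : ℕ) : ℤ) := Int.natCast_nonneg _
    refine ⟨?_, ?_, ?_⟩ <;> cases b <;> simp <;> omega⟩

def idxOf (x : SignedSet n) : Fin n :=
  ⟨x.1.natAbs - 1, by obtain ⟨h1, h2, h3⟩ := x.2; omega⟩

def sgnOf (x : SignedSet n) : Bool := decide (0 < x.1)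

lemma idxOf_mk (i : Fin n) (b : Bool) : idxOf (mk n i b) = i := by
  apply Fin.ext
  show ((if b then (1:ℤ) else -1) * (((i : ℕ) : ℤ) + 1)).natAbs - 1 = (i : ℕ)
  cases b <;> simp <;> omega

lemma sgnOf_mk (i : Fin n) (b : Bool) : sgnOf (mk n i b) = b := by
  have h0 : (0 : ℤ) ≤ ((i : ℕ) : ℤ) := Int.natCast_nonneg _
  cases b <;> simp [sgnOf, mk] <;> omega

lemma mk_eta (x : SignedSet n) : mk n (idxOf x) (sgnOf x) = x := by
  obtain ⟨v, h1, h2, h3⟩ := x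
  apply Subtype.ext
  show (if decide (0 < v) then (1:ℤ) else -1) * ((((v.natAbs - 1 : ℕ) : ℤ)) + 1) = v
  by_cases hv : 0 < v <;> simp [hv] <;> omega

lemma mk_inj {i j : Fin n} {b c : Bool} (h : mk n i b = mk n j c) : i = j ∧ b = c :=
  ⟨by rw [← idxOf_mk i b, h, idxOf_mk], by rw [← sgnOf_mk i b, h, sgnOf_mk]⟩

lemma negX_mk (i : Fin n) (b : Bool) : negX n (mk n i b) = mk n i (!b) :=
  Subtype.ext (by cases b <;> simp [negX, mk])

lemma mk_pos (i : Fin n) (b : Bool) : 0 < (mk n i b).1 ↔ b = true := by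
  have h0 : (0 : ℤ) ≤ ((i : ℕ) : ℤ) := Int.natCast_nonneg _
  cases b <;> simp [mk] <;> omega

lemma mk_not_val (i : Fin n) (b : Bool) : (mk n i (!b)).1 = -(mk n i b).1 := by
  cases b <;> simp [mk]

lemma xor_xor_left (a c : Bool) : Bool.xor a (Bool.xor a c) = c := by
  cases a <;> cases c <;> rfl

/-- The element of the wreath product determined by `π` and signs `t`. -/
def wPerm (π : Equiv.Perm (Fin n)) (t : Fin n → Bool) : Equiv.Perm (SignedSet n) where
  toFun x := mk n (π (idxOf x)) (Bool.xor (t (idxOf x)) (sgnOf x))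
  invFun x := mk n (π.symm (idxOf x)) (Bool.xor (t (π.symm (idxOf x))) (sgnOf x))
  left_inv x := by
    simp only [idxOf_mk, sgnOf_mk, Equiv.symm_apply_apply, xor_xor_left]
    exact mk_eta x
  right_inv x := by
    simp only [idxOf_mk, sgnOf_mk, Equiv.apply_symm_apply, xor_xor_left]
    exact mk_eta x

lemma wPerm_mk (π : Equiv.Perm (Fin n)) (t : Fin n → Bool) (i : Fin n) (b : Bool) :
    wPerm π t (mk n i b) = mk n (π i) (Bool.xor (t i) b) := by
  show mk n (π (idxOf (mk n i b))) _ = _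
  rw [idxOf_mk, sgnOf_mk]

lemma wPerm_mem (π : Equiv.Perm (Fin n)) (t : Fin n → Bool) :
    wPerm π t ∈ hyperoctahedral n := by
  intro x
  rw [← mk_eta x, negX_mk, wPerm_mk, wPerm_mk]
  have hb : Bool.xor (t (idxOf x)) (!(sgnOf x)) = !(Bool.xor (t (idxOf x)) (sgnOf x)) := by
    cases t (idxOf x) <;> cases sgnOf x <;> rfl
  rw [hb, mk_not_val]

/-- Decomposition map for the hyperoctahedral group. -/
def Ψ (n : ℕ) (p : Equiv.Perm (Fin n) × (Fin n → Bool)) : hyperoctahedral n :=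
  ⟨wPerm p.1 p.2, wPerm_mem p.1 p.2⟩

lemma Ψ_apply_mk (p : Equiv.Perm (Fin n) × (Fin n → Bool)) (i : Fin n) (b : Bool) :
    ((Ψ n p : Equiv.Perm (SignedSet n))) (mk n i b) = mk n (p.1 i) (Bool.xor (p.2 i) b) :=
  wPerm_mk p.1 p.2 i b

lemma Ψ_injective : Function.Injective (Ψ n) := by
  intro p q h
  have h' : ∀ i b, wPerm p.1 p.2 (mk n i b) = wPerm q.1 q.2 (mk n i b) := by
    intro i b
    have := congrArg (fun σ : hyperoctahedral n => (σ : Equiv.Perm (SignedSet n)) (mk n i b)) h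
    exact this
  have hkey : ∀ i : Fin n, p.1 i = q.1 i ∧ p.2 i = q.2 i := by
    intro i
    have := h' i true
    rw [wPerm_mk, wPerm_mk] at this
    obtain ⟨h1, h2⟩ := mk_inj this
    refine ⟨h1, ?_⟩
    cases hp : p.2 i <;> cases hq : q.2 i <;> simp [hp, hq] at h2 ⊢ <;> assumption
  have h1 : p.1 = q.1 := Equiv.ext fun i => (hkey i).1
  have h2 : p.2 = q.2 := funext fun i => (hkey i).2
  exact Prod.ext h1 h2

lemma Ψ_surjective : Function.Surjective (Ψ n) := by
  rintro ⟨σ₀, hσ⟩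
  have hst : ∀ x, σ₀ (negX n x) = negX n (σ₀ x) := fun x => Subtype.ext ((hσ x).trans rfl)
  set u : Fin n → SignedSet n := fun i => σ₀ (mk n i true) with hu
  have hinj : Function.Injective fun i => idxOf (u i) := by
    intro i j hij
    simp only at hij
    by_cases hs : sgnOf (u i) = sgnOf (u j)
    · have : u i = u j := by rw [← mk_eta (u i), ← mk_eta (u j), hij, hs]
      have h2 : mk n i true = mk n j true := σ₀.injective this
      exact (mk_inj h2).1
    · exfalso
      have hs' : sgnOf (u i) = !(sgnOf (u j)) := by
        cases hi : sgnOf (u i) <;> cases hj : sgnOf (u j) <;> simp_all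
      have : u i = negX n (u j) := by
        rw [← mk_eta (u i), ← mk_eta (u j), hij, hs', negX_mk]
      rw [hu] at this
      simp only at this
      rw [← hst, negX_mk] at this
      have h2 : mk n i true = mk n j false := σ₀.injective this
      simpa using (mk_inj h2).2
  have hbij : Function.Bijective fun i => idxOf (u i) := Finite.injective_iff_bijective.mp hinj
  refine ⟨(Equiv.ofBijective _ hbij, fun i => !(sgnOf (u i))), ?_⟩
  apply Subtype.ext
  apply Equiv.ext
  intro x
  have key : ∀ (i : Fin n) (b : Bool),
      wPerm (Equiv.ofBijective _ hbij) (fun i => !(sgnOf (u i))) (mk n i b) = σ₀ (mk n i b) := by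
    intro i b
    rw [wPerm_mk]
    have hofb : (Equiv.ofBijective _ hbij) i = idxOf (u i) := rfl
    have he : mk n (idxOf (u i)) (sgnOf (u i)) = u i := mk_eta _
    cases b
    · have h1 : σ₀ (mk n i false) = negX n (u i) := by
        rw [show mk n i false = negX n (mk n i true) from (negX_mk i true).symm, hst]
      rw [h1, hofb]
      conv_rhs => rw [← he, negX_mk]
      congr 1
      cases sgnOf (u i) <;> rfl
    · have h1 : σ₀ (mk n i true) = u i := rfl
      rw [h1, hofb]
      conv_rhs => rw [← he]
      congr 1
      cases sgnOf (u i) <;> rfl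
  rw [← mk_eta x]
  exact key _ _

lemma Ψ_bijective : Function.Bijective (Ψ n) := ⟨Ψ_injective, Ψ_surjective⟩

lemma Ψ_one : Ψ n (1, fun _ => false) = 1 := by
  apply Subtype.ext
  apply Equiv.ext
  intro x
  rw [← mk_eta x]
  show wPerm 1 (fun _ => false) _ = (1 : Equiv.Perm (SignedSet n)) _
  rw [wPerm_mk]
  simp

lemma Ψ_mul (p q : Equiv.Perm (Fin n) × (Fin n → Bool)) :
    Ψ n p * Ψ n q = Ψ n (p.1 * q.1, fun i => Bool.xor (q.2 i) (p.2 (q.1 i))) := by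
  obtain ⟨π, t⟩ := p
  obtain ⟨ρ, s⟩ := q
  apply Subtype.ext
  apply Equiv.ext
  intro x
  rw [← mk_eta x]
  show wPerm π t (wPerm ρ s _) = wPerm (π * ρ) (fun i => Bool.xor (s i) (t (ρ i))) _
  rw [wPerm_mk, wPerm_mk, wPerm_mk]
  simp only [Equiv.Perm.mul_apply]
  congr 1
  cases t (ρ (idxOf x)) <;> cases s (idxOf x) <;> cases sgnOf x <;> rfl

lemma Ψ_inv (p : Equiv.Perm (Fin n) × (Fin n → Bool)) :
    (Ψ n p)⁻¹ = Ψ n (p.1⁻¹, fun i => p.2 (p.1⁻¹ i)) := by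
  refine (inv_eq_of_mul_eq_one_right ?_)
  rw [Ψ_mul]
  have : (fun i => Bool.xor (p.2 (p.1⁻¹ i)) (p.2 (p.1⁻¹ i))) = fun _ => false := by
    funext i; exact Bool.xor_self _
  simp only [mul_inv_cancel, this]
  exact Ψ_one

lemma embPos_eq (i : Fin n) : embPos n i = mk n i true :=
  Subtype.ext (by simp [embPos, mk])

lemma posIdx_Ψ (p : Equiv.Perm (Fin n) × (Fin n → Bool)) :
    posIdx n (Ψ n p) = Finset.univ.filter fun i => p.2 i = false := by
  unfold posIdx
  apply Finset.filter_congr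
  intro i _
  rw [embPos_eq, Ψ_apply_mk, mk_pos]
  cases p.2 i <;> simp

end HypAux

end HypAux
namespace HypAux

open Finset
open scoped symmDiff

variable {n : ℕ} {K : Type} [Field K]

def sgnK (K : Type) [Field K] (b : Bool) : K := if b then -1 else 1

lemma sgnK_xor (a b : Bool) : sgnK K (Bool.xor a b) = sgnK K a * sgnK K b := by
  cases a <;> cases b <;> simp [sgnK]

lemma sgnK_mul_self (b : Bool) : sgnK K b * sgnK K b = 1 := by
  cases b <;> simp [sgnK]

lemma sgnK_not (b : Bool) : sgnK K (!b) = -sgnK K b := by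
  cases b <;> simp [sgnK]

def gfun (K : Type) [Field K] (I : Finset (Fin n)) (t : Fin n → Bool) : K :=
  ∏ i ∈ I, sgnK K (t i)

lemma gamma_eq (I : Finset (Fin n)) (p : Equiv.Perm (Fin n) × (Fin n → Bool)) :
    ((-1 : K) ^ (I.card - (I ∩ posIdx n (Ψ n p)).card)) = gfun K I p.2 := by
  classical
  rw [posIdx_Ψ]
  have h1 : I ∩ Finset.univ.filter (fun i => p.2 i = false)
      = I.filter fun i => p.2 i = false := by
    ext i; simp [Finset.mem_filter]
  rw [h1]
  have h2 : I.card - (I.filter fun i => p.2 i = false).card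
      = (I.filter fun i => p.2 i = true).card := by
    have h3 := Finset.card_filter_add_card_filter_not
      (s := I) (p := fun i => p.2 i = true)
    have h4 : (I.filter fun i => ¬ p.2 i = true) = I.filter fun i => p.2 i = false := by
      apply Finset.filter_congr; intro i _; simp
    rw [h4] at h3
    omega
  rw [h2]
  unfold gfun
  rw [← Finset.prod_filter_mul_prod_filter_not I (fun i => p.2 i = true) (fun i => sgnK K (p.2 i))]
  have hA : ∏ i ∈ I.filter (fun i => p.2 i = true), sgnK K (p.2 i)
      = (-1 : K) ^ (I.filter fun i => p.2 i = true).card := by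
    rw [Finset.prod_congr rfl (g := fun _ => (-1 : K))
      (fun i hi => by rw [(Finset.mem_filter.mp hi).2]; rfl)]
    exact Finset.prod_const _
  have hB : ∏ i ∈ I.filter (fun i => ¬ p.2 i = true), sgnK K (p.2 i) = 1 := by
    rw [Finset.prod_congr rfl (g := fun _ => (1 : K))
      (fun i hi => by
        have := (Finset.mem_filter.mp hi).2
        have hb : p.2 i = false := by simpa using this
        rw [hb]; rfl)]
    exact Finset.prod_const_one
  rw [hA, hB, mul_one]

lemma gfun_mul (I M : Finset (Fin n)) (t : Fin n → Bool) :
    gfun K I t * gfun K M t = gfun K (I ∆ M) t := by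
  classical
  unfold gfun
  set A := ∏ i ∈ I \ M, sgnK K (t i) with hA
  set B := ∏ i ∈ M \ I, sgnK K (t i) with hB
  set C := ∏ i ∈ I ∩ M, sgnK K (t i) with hC
  have hI : ∏ i ∈ I, sgnK K (t i) = A * C := by
    rw [hA, hC, ← Finset.prod_union (Finset.disjoint_sdiff_inter I M),
      Finset.sdiff_union_inter]
  have hM : ∏ i ∈ M, sgnK K (t i) = B * C := by
    rw [hB, hC, Finset.inter_comm, ← Finset.prod_union (Finset.disjoint_sdiff_inter M I),
      Finset.sdiff_union_inter]
  have hS : ∏ i ∈ I ∆ M, sgnK K (t i) = A * B := by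
    rw [symmDiff_def, Finset.sup_eq_union, Finset.prod_union (disjoint_sdiff_sdiff)]
  have hCC : C * C = 1 := by
    rw [hC, ← Finset.prod_mul_distrib]
    rw [Finset.prod_congr rfl (g := fun _ => (1:K)) (fun i _ => sgnK_mul_self (t i))]
    exact Finset.prod_const_one
  rw [hI, hM, hS, show A * C * (B * C) = A * B * (C * C) by ring, hCC, mul_one]

lemma sum_gfun [CharZero K] (M : Finset (Fin n)) :
    ∑ t : Fin n → Bool, gfun K M t = if M = ∅ then ((2 : K) ^ n) else 0 := by
  classical
  split_ifs with h
  · subst h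
    simp only [gfun, Finset.prod_empty]
    rw [Finset.sum_const, Finset.card_univ]
    simp [Fintype.card_fun]
  · obtain ⟨a, ha⟩ := Finset.nonempty_iff_ne_empty.mpr h
    set S := ∑ t : Fin n → Bool, gfun K M t with hS
    have hinvol : Function.Involutive (fun t : Fin n → Bool => Function.update t a (!t a)) := by
      intro t
      funext i
      by_cases hi : i = a
      · subst hi; simp
      · simp [Function.update_of_ne hi]
    have hpt : ∀ t, gfun K M (Function.update t a (!t a)) = - gfun K M t := by
      intro t
      unfold gfun
      rw [← Finset.mul_prod_erase _ _ ha, ← Finset.mul_prod_erase _ (fun i => sgnK K (t i)) ha]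
      rw [Function.update_self, sgnK_not]
      rw [Finset.prod_congr rfl (fun i hi => by
        rw [Function.update_of_ne (Finset.ne_of_mem_erase hi)])]
      ring
    have hneg : S = -S := by
      have h1 : ∑ t : Fin n → Bool, gfun K M (Function.update t a (!t a))
          = ∑ t : Fin n → Bool, gfun K M t :=
        Fintype.sum_bijective _ (Function.Involutive.toPerm _ hinvol).bijective _ _ (fun t => rfl)
      calc S = ∑ t : Fin n → Bool, gfun K M (Function.update t a (!t a)) := h1.symm
        _ = ∑ t : Fin n → Bool, - gfun K M t := by exact Finset.sum_congr rfl fun t _ => hpt t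
        _ = -S := by rw [← Finset.sum_neg_distrib]
    have h2 : (2 : K) * S = 0 := by
      rw [two_mul]
      nth_rewrite 1 [hneg]
      ring
    exact (mul_eq_zero.mp h2).resolve_left two_ne_zero

end HypAux
namespace HypAux

open Finset

variable {n : ℕ}

lemma image_mul (I : Finset (Fin n)) (φ π : Equiv.Perm (Fin n)) :
    I.image ⇑(φ * π) = (I.image ⇑π).image ⇑φ := by
  rw [Finset.image_image]
  rfl

lemma image_inv_eq {I J : Finset (Fin n)} (π : Equiv.Perm (Fin n)) (h : I.image ⇑π = J) :
    J.image ⇑π⁻¹ = I := by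
  rw [← h, Finset.image_image]
  have hid : ⇑π⁻¹ ∘ ⇑π = id := funext fun a => π.symm_apply_apply a
  rw [hid, Finset.image_id]

lemma stab_card (I : Finset (Fin n)) :
    (Finset.univ.filter fun π : Equiv.Perm (Fin n) => I.image ⇑π = I).card
      = I.card.factorial * (n - I.card).factorial := by
  classical
  set f : Fin n → Bool := fun a => decide (a ∈ I) with hf
  have hiff : ∀ π : Equiv.Perm (Fin n), (I.image ⇑π = I) ↔ f ∘ ⇑π = f := by
    intro π
    constructor
    · intro h
      funext a
      have hx : π a ∈ I ↔ a ∈ I := by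
        constructor
        · intro hpa
          rw [← h] at hpa
          obtain ⟨b, hb, hba⟩ := Finset.mem_image.mp hpa
          rwa [← π.injective hba]
        · intro ha; rw [← h]; exact Finset.mem_image_of_mem _ ha
      simp only [hf, Function.comp_apply]
      exact decide_eq_decide.mpr hx
    · intro h
      have h' : ∀ a, (π a ∈ I ↔ a ∈ I) := by
        intro a
        have := congrFun h a
        simpa [hf, decide_eq_decide] using this
      apply Finset.eq_of_subset_of_card_le
      · intro x hx
        obtain ⟨b, hb, rfl⟩ := Finset.mem_image.mp hx
        exact (h' b).mpr hb
      · rw [Finset.card_image_of_injective _ π.injective]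
  rw [Finset.filter_congr (fun π _ => hiff π)]
  have hcard : (Finset.univ.filter fun π : Equiv.Perm (Fin n) => f ∘ ⇑π = f).card
      = Fintype.card {π : Equiv.Perm (Fin n) // f ∘ ⇑π = f} := (Fintype.card_subtype _).symm
  rw [hcard, DomMulAct.stabilizer_card f, Fintype.prod_bool]
  congr 1
  · congr 1
    rw [Fintype.card_subtype]
    congr 1
    rw [show Finset.univ.filter (fun a => f a = true) = I by ext a; simp [hf]]
  · congr 1
    rw [Fintype.card_subtype]
    rw [show Finset.univ.filter (fun a => f a = false) = Iᶜ by ext a; simp [hf]]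
    rw [Finset.card_compl]
    simp

lemma count_perm (I J : Finset (Fin n)) :
    (Finset.univ.filter fun π : Equiv.Perm (Fin n) => I.image ⇑π = J).card
      = if I.card = J.card then I.card.factorial * (n - I.card).factorial else 0 := by
  classical
  split_ifs with h
  · have e₁ : {a : Fin n // a ∈ I} ≃ {a : Fin n // a ∈ J} := Finset.equivOfCardEq h
    have hccard : Iᶜ.card = Jᶜ.card := by rw [Finset.card_compl, Finset.card_compl, h]
    have e₂ : {a : Fin n // ¬ a ∈ I} ≃ {a : Fin n // ¬ a ∈ J} :=
      ((Equiv.subtypeEquivRight (fun a => (Finset.mem_compl (s := I)).symm)).trans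
        (Finset.equivOfCardEq hccard)).trans
        (Equiv.subtypeEquivRight (fun a => Finset.mem_compl))
    set π₀ : Equiv.Perm (Fin n) :=
      ((Equiv.sumCompl (· ∈ I)).symm.trans
        ((e₁.sumCongr e₂).trans (Equiv.sumCompl (· ∈ J)))) with hπ₀
    have himg : I.image ⇑π₀ = J := by
      apply Finset.eq_of_subset_of_card_le
      · intro x hx
        obtain ⟨a, ha, rfl⟩ := Finset.mem_image.mp hx
        have hv : π₀ a = (e₁ ⟨a, ha⟩).1 := by
          simp [hπ₀, Equiv.sumCompl_symm_apply_of_pos ha]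
        rw [hv]
        exact (e₁ ⟨a, ha⟩).2
      · rw [Finset.card_image_of_injective _ π₀.injective, h]
    rw [← stab_card I]
    apply Finset.card_nbij' (fun π => π₀⁻¹ * π) (fun τ => π₀ * τ)
    · intro π hπ
      simp only [Finset.mem_coe, Finset.mem_filter, Finset.mem_univ, true_and] at hπ ⊢
      rw [image_mul, hπ]
      exact image_inv_eq π₀ himg
    · intro τ hτ
      simp only [Finset.mem_coe, Finset.mem_filter, Finset.mem_univ, true_and] at hτ ⊢
      rw [image_mul, hτ, himg]
    · intro π _; group
    · intro τ _; group
  · rw [Finset.card_eq_zero.mpr]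
    apply Finset.filter_eq_empty_iff.mpr
    intro π _ hP
    exact h (by rw [← hP, Finset.card_image_of_injective _ π.injective])

end HypAux
namespace HypAux

open Finset
open scoped symmDiff

variable {n : ℕ} {K : Type} [Field K]

lemma gfun_xor (J : Finset (Fin n)) (s u : Fin n → Bool) :
    gfun K J (fun i => Bool.xor (s i) (u i)) = gfun K J s * gfun K J u := by
  unfold gfun
  rw [← Finset.prod_mul_distrib]
  exact Finset.prod_congr rfl fun i _ => sgnK_xor _ _

lemma gfun_image (J : Finset (Fin n)) (t : Fin n → Bool) (φ : Equiv.Perm (Fin n)) :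
    gfun K (J.image ⇑φ) t = ∏ j ∈ J, sgnK K (t (φ j)) := by
  unfold gfun
  exact Finset.prod_image (fun x _ y _ h => φ.injective h)

lemma key_sum [CharZero K] (I J : Finset (Fin n)) (ρ : hyperoctahedral n) :
    ∑ σ : hyperoctahedral n,
      ((-1 : K) ^ (I.card - (I ∩ posIdx n σ).card)) *
      ((-1 : K) ^ (J.card - (J ∩ posIdx n (σ⁻¹ * ρ)).card))
    = ((2:K)^n *
        (((Finset.univ.filter fun π : Equiv.Perm (Fin n) => I.image ⇑π = J).card : ℕ) : K))
      * ((-1 : K) ^ (J.card - (J ∩ posIdx n ρ).card)) := by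
  classical
  obtain ⟨r, rfl⟩ := Ψ_surjective ρ
  rw [← Fintype.sum_bijective (Ψ n) Ψ_bijective _ _ (fun p => rfl)]
  have hterm : ∀ p : Equiv.Perm (Fin n) × (Fin n → Bool),
      ((-1 : K) ^ (I.card - (I ∩ posIdx n (Ψ n p)).card)) *
      ((-1 : K) ^ (J.card - (J ∩ posIdx n ((Ψ n p)⁻¹ * Ψ n r)).card))
      = gfun K I p.2 * (gfun K J r.2 * gfun K (J.image ⇑(p.1⁻¹ * r.1)) p.2) := by
    intro p
    have hinvmul : (Ψ n p)⁻¹ * Ψ n r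
        = Ψ n (p.1⁻¹ * r.1, fun i => Bool.xor (r.2 i) (p.2 (p.1⁻¹ (r.1 i)))) := by
      rw [Ψ_inv, Ψ_mul]
    rw [hinvmul, gamma_eq, gamma_eq]
    congr 1
    rw [show (fun i => Bool.xor (r.2 i) (p.2 (p.1⁻¹ (r.1 i))))
        = fun i => Bool.xor (r.2 i) ((fun j => p.2 (p.1⁻¹ (r.1 j))) i) from rfl]
    rw [gfun_xor, gfun_image]
    rfl
  rw [Finset.sum_congr rfl fun p _ => hterm p]
  rw [Fintype.sum_prod_type]
  have hinner : ∀ π : Equiv.Perm (Fin n),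
      ∑ t : Fin n → Bool, gfun K I t * (gfun K J r.2 * gfun K (J.image ⇑(π⁻¹ * r.1)) t)
      = gfun K J r.2 * (if I = J.image ⇑(π⁻¹ * r.1) then (2:K)^n else 0) := by
    intro π
    have hre : ∀ t : Fin n → Bool,
        gfun K I t * (gfun K J r.2 * gfun K (J.image ⇑(π⁻¹ * r.1)) t)
        = gfun K J r.2 * gfun K (I ∆ J.image ⇑(π⁻¹ * r.1)) t := by
      intro t
      rw [← gfun_mul]
      ring
    rw [Finset.sum_congr rfl fun t _ => hre t, ← Finset.mul_sum]
    congr 1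
    rw [sum_gfun]
    congr 1
    rw [show (∅ : Finset (Fin n)) = ⊥ from rfl]
    rw [symmDiff_eq_bot]
  have hstep : ∀ π : Equiv.Perm (Fin n),
      ∑ t : Fin n → Bool, gfun K I t * (gfun K J r.2 * gfun K (J.image ⇑(π⁻¹ * r.1)) t)
      = gfun K J r.2 * (if I = J.image ⇑(π⁻¹ * r.1) then (2:K)^n else 0) := hinner
  rw [Finset.sum_congr rfl fun π _ => hstep π, ← Finset.mul_sum]
  have hcount : ∑ π : Equiv.Perm (Fin n), (if I = J.image ⇑(π⁻¹ * r.1) then (2:K)^n else 0)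
      = (((Finset.univ.filter fun π : Equiv.Perm (Fin n) => I.image ⇑π = J).card : ℕ) : K)
        * (2:K)^n := by
    rw [← Finset.sum_filter]
    rw [Finset.sum_const, nsmul_eq_mul]
    congr 2
    apply Finset.card_nbij' (fun π => r.1⁻¹ * π) (fun τ => r.1 * τ)
    · intro π hπ
      simp only [Finset.mem_coe, Finset.mem_filter, Finset.mem_univ, true_and] at hπ ⊢
      have h2 : J.image ⇑(π⁻¹ * r.1) = I := hπ.symm
      have h3 := image_inv_eq _ h2
      rwa [mul_inv_rev, inv_inv] at h3
    · intro τ hτ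
      simp only [Finset.mem_coe, Finset.mem_filter, Finset.mem_univ, true_and] at hτ ⊢
      have h3 := image_inv_eq _ hτ
      rw [show (r.1 * τ)⁻¹ * r.1 = τ⁻¹ by group]
      exact h3.symm
    · intro π _; group
    · intro τ _; group
  rw [hcount, gamma_eq]
  ring

end HypAux
/-- For subsets `I, J` of `{1, …, n}`:
`y_I · y_J = 2^{n−|I|}·|I|!·(n−|I|)!·y_J` if `|I| = |J|`, and `y_I · y_J = 0` otherwise. -/
theorem yElt_mul_yElt (n : ℕ) (K : Type) [Field K] [CharZero K] (I J : Finset (Fin n)) :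
    (I.card = J.card → yElt n K I * yElt n K J =
      ((2 : K) ^ (n - I.card) * (Nat.factorial I.card : K) *
        (Nat.factorial (n - I.card) : K)) • yElt n K J) ∧
    (I.card ≠ J.card → yElt n K I * yElt n K J = 0) := by
  classical
  set N : ℕ := (Finset.univ.filter fun π : Equiv.Perm (Fin n) => I.image ⇑π = J).card with hN
  have master : yElt n K I * yElt n K J
      = (((2:K) ^ I.card)⁻¹ * ((2:K)^n * (N : K))) • yElt n K J := by
    unfold yElt
    rw [smul_mul_assoc, mul_smul_comm, smul_smul]
    rw [Finset.sum_mul_sum]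
    simp only [MonoidAlgebra.single_mul_single]
    have step1 : ∀ σ : hyperoctahedral n,
        (∑ τ : hyperoctahedral n, MonoidAlgebra.single (σ * τ)
          ((-1:K) ^ (I.card - (I ∩ posIdx n σ).card) *
           (-1:K) ^ (J.card - (J ∩ posIdx n τ).card)))
        = ∑ ρ : hyperoctahedral n, MonoidAlgebra.single ρ
          ((-1:K) ^ (I.card - (I ∩ posIdx n σ).card) *
           (-1:K) ^ (J.card - (J ∩ posIdx n (σ⁻¹ * ρ)).card)) := by
      intro σ
      apply Fintype.sum_bijective (fun τ => σ * τ) (Group.mulLeft_bijective σ)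
      intro τ
      rw [inv_mul_cancel_left]
    rw [Finset.sum_congr rfl fun σ _ => step1 σ]
    rw [Finset.sum_comm]
    have step2 : ∀ ρ : hyperoctahedral n,
        (∑ σ : hyperoctahedral n, MonoidAlgebra.single ρ
          ((-1:K) ^ (I.card - (I ∩ posIdx n σ).card) *
           (-1:K) ^ (J.card - (J ∩ posIdx n (σ⁻¹ * ρ)).card)))
        = ((2:K)^n * (N : K)) • MonoidAlgebra.single ρ
            ((-1:K) ^ (J.card - (J ∩ posIdx n ρ).card)) := by
      intro ρ
      simp only [← MonoidAlgebra.singleAddHom_apply, ← map_sum]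
      simp only [MonoidAlgebra.singleAddHom_apply]
      rw [HypAux.key_sum I J ρ]
      rw [MonoidAlgebra.smul_single']
    rw [Finset.sum_congr rfl fun ρ _ => step2 ρ]
    rw [← Finset.smul_sum, smul_smul, smul_smul]
    congr 1
    ring
  constructor
  · intro hcard
    have hIle : I.card ≤ n := by
      have := Finset.card_le_univ I
      simpa using this
    rw [master, hN, HypAux.count_perm, if_pos hcard]
    congr 1
    have h2 : (2:K)^n = (2:K)^(n - I.card) * (2:K)^I.card := by
      rw [← pow_add, Nat.sub_add_cancel hIle]
    have h2ne : ((2:K) ^ I.card) ≠ 0 := pow_ne_zero _ two_ne_zero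
    push_cast
    rw [h2]
    field_simp
  · intro hcard
    rw [master, hN, HypAux.count_perm, if_neg hcard]
    simp
end
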